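/- For every N ≥ 1, every n ≥ 0, and all nonnegative integers x_0, …, x_{N−1} with ∑_k x_k = 2^n, the probability vector (x_0/2^n, …, x_{N−1}/2^n) on N states is realizable from the switch set consisting of the single N-state ½-pswitch with at most f(n,N) pswitches. -/

import Mathlib

noncomputable section

/-- Series composition: distribution of `min` of two independent states. -/
def smin {N : ℕ} (p q : Fin N → ℝ) : Fin N → ℝ :=
  fun k => ∑ i, ∑ j, if min i j = k then p i * q j else 0

/-- Parallel composition: distribution of `max` of two independent states. -/
def smax {N : ℕ} (p q : Fin N → ℝ) : Fin N → ℝ :=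
  fun k => ∑ i, ∑ j, if max i j = k then p i * q j else 0

/-- The point mass at state `s`. -/
def delta {N : ℕ} (s : Fin N) : Fin N → ℝ := fun i => if i = s then 1 else 0

/-- `Realizable S p m`: the vector `p` is obtained from point masses (0 pswitches)
and elements of the switch set `S` (1 pswitch each) by series and parallel
compositions, using `m` pswitches in total. -/
inductive Realizable {N : ℕ} (S : Set (Fin N → ℝ)) : (Fin N → ℝ) → ℕ → Prop
  | point (s : Fin N) : Realizable S (delta s) 0
  | single {p : Fin N → ℝ} : p ∈ S → Realizable S p 1
  | series {p q : Fin N → ℝ} {a b : ℕ} :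
      Realizable S p a → Realizable S q b → Realizable S (smin p q) (a + b)
  | parallel {p q : Fin N → ℝ} {a b : ℕ} :
      Realizable S p a → Realizable S q b → Realizable S (smax p q) (a + b)

/-- The `N`-state ½-pswitch: probability ½ on state `0`, ½ on state `N-1`,
and `0` elsewhere. -/
def halfSwitch (N : ℕ) : Fin N → ℝ :=
  fun i => (if (i : ℕ) = 0 then (1 : ℝ) / 2 else 0) + (if (i : ℕ) = N - 1 then (1 : ℝ) / 2 else 0)

/-- The complexity function `f(n,N)`: `2^n - 1` for `n ≤ ⌈log₂ N⌉` and
`(N-1)(n - ⌈log₂ N⌉) + 2^{⌈log₂ N⌉} - 1` for `n ≥ ⌈log₂ N⌉`. -/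
def f (n N : ℕ) : ℕ :=
  if n ≤ Nat.clog 2 N then 2 ^ n - 1
  else (N - 1) * (n - Nat.clog 2 N) + 2 ^ (Nat.clog 2 N) - 1

/-! Induct on `n`, measuring `x` by the number `w` of states it charges. A vector with
`∑ x = 2^(n+1)` charging at least two states is cut, scanning the states upwards, into
`y + z` with `∑ y = ∑ z = 2^n` and every state charged by `y` below every state charged by `z`;
the pieces share at most one state, so their counts add up to at most `w + 1`. Then
`x / 2^(n+1) = max (y / 2^n) (min h (z / 2^n))` for the ½-pswitch `h`: with probability ½ the
switch sits at the bottom state and the `max` returns `y`, otherwise at the top state and it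
returns `z`. Since `f n w = ∑_{i<n} min (w-1) 2^i`, the cost recursion
`f n w₁ + 1 + f n w₂ ≤ f (n+1) w` closes the induction. -/

open Finset

lemma f_eq_sum (n N : ℕ) : f n N = ∑ i ∈ range n, min (N - 1) (2 ^ i) := by
  have hterm (i : ℕ) : min (N - 1) (2 ^ i) = if i < Nat.clog 2 N then 2 ^ i else N - 1 := by
    split_ifs with h <;> rw [Nat.lt_clog_iff_pow_lt one_lt_two] at h <;> omega
  have hgeom (k : ℕ) : ∑ i ∈ range k, 2 ^ i = 2 ^ k - 1 := by simp [Nat.geomSum_eq le_rfl]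
  unfold f
  split_ifs with hn
  · rw [← hgeom]
    exact sum_congr rfl fun i hi => by rw [hterm, if_pos (by simp at hi; omega)]
  · obtain ⟨k, rfl⟩ : ∃ k, n = Nat.clog 2 N + k := ⟨n - Nat.clog 2 N, by omega⟩
    have hlow :
        ∑ i ∈ range (Nat.clog 2 N), min (N - 1) (2 ^ i) = 2 ^ Nat.clog 2 N - 1 := by
      rw [← hgeom]
      exact sum_congr rfl fun i hi => by rw [hterm, if_pos (by simpa using hi)]
    have hhigh : ∑ i ∈ range k, min (N - 1) (2 ^ (Nat.clog 2 N + i)) = k * (N - 1) := by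
      rw [sum_congr rfl fun i _ => by rw [hterm, if_neg (by omega)], sum_const, card_range,
        smul_eq_mul]
    have : 1 ≤ 2 ^ Nat.clog 2 N := Nat.one_le_two_pow
    rw [sum_range_add, hlow, hhigh, Nat.add_sub_cancel_left, mul_comm]
    omega

lemma f_monotone (n : ℕ) : Monotone (f n) := by
  intro w w' hw
  simp only [f_eq_sum]
  gcongr

lemma f_add_f_lt_f_succ {n w₁ w₂ w : ℕ} (h₁ : 1 ≤ w₁) (h₂ : 1 ≤ w₂) (hw : 2 ≤ w)
    (h : w₁ + w₂ ≤ w + 1) : f n w₁ + f n w₂ < f (n + 1) w := by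
  simp only [f_eq_sum, sum_range_succ', ← sum_add_distrib]
  have hterm (i : ℕ) :
      min (w₁ - 1) (2 ^ i) + min (w₂ - 1) (2 ^ i) ≤ min (w - 1) (2 ^ (i + 1)) := by
    rw [pow_succ]
    omega
  have := sum_le_sum fun i (_ : i ∈ range n) => hterm i
  simp only [pow_zero]
  omega

variable {N : ℕ}

lemma smin_add_left (p₁ p₂ q : Fin N → ℝ) : smin (p₁ + p₂) q = smin p₁ q + smin p₂ q := by
  ext k
  simp only [smin, Pi.add_apply, ← sum_add_distrib]
  refine sum_congr rfl fun i _ => sum_congr rfl fun j _ => ?_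
  split_ifs <;> ring

lemma smin_smul_left (c : ℝ) (p q : Fin N → ℝ) : smin (c • p) q = c • smin p q := by
  ext k
  simp only [smin, Pi.smul_apply, smul_eq_mul, mul_sum]
  refine sum_congr rfl fun i _ => sum_congr rfl fun j _ => ?_
  split_ifs <;> ring

lemma smax_add_right (p q₁ q₂ : Fin N → ℝ) : smax p (q₁ + q₂) = smax p q₁ + smax p q₂ := by
  ext k
  simp only [smax, Pi.add_apply, ← sum_add_distrib]
  refine sum_congr rfl fun i _ => sum_congr rfl fun j _ => ?_
  split_ifs <;> ring

lemma smax_smul_right (c : ℝ) (p q : Fin N → ℝ) : smax p (c • q) = c • smax p q := by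
  ext k
  simp only [smax, Pi.smul_apply, smul_eq_mul, mul_sum]
  refine sum_congr rfl fun i _ => sum_congr rfl fun j _ => ?_
  split_ifs <;> ring

lemma smax_eq_smul_of_le {p q : Fin N → ℝ} (hpq : ∀ i j, p i ≠ 0 → q j ≠ 0 → i ≤ j) :
    smax p q = (∑ i, p i) • q := by
  ext k
  simp only [smax, Pi.smul_apply, smul_eq_mul, sum_mul]
  refine sum_congr rfl fun i _ => ?_
  rw [← Fintype.sum_ite_eq' k fun j => p i * q j]
  refine sum_congr rfl fun j _ => ?_
  by_cases h : p i * q j = 0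
  · simp [h]
  · rw [max_eq_right (hpq i j (left_ne_zero_of_mul h) (right_ne_zero_of_mul h))]

lemma smin_delta_left (s : Fin N) (q : Fin N → ℝ) :
    smin (delta s) q = fun k => ∑ j, if min s j = k then q j else 0 := by
  ext k
  rw [smin, Fintype.sum_eq_single s fun i hi => by simp [delta, hi]]
  simp [delta]

lemma smax_delta_right (p : Fin N → ℝ) (s : Fin N) :
    smax p (delta s) = fun k => ∑ i, if max i s = k then p i else 0 := by
  ext k
  refine sum_congr rfl fun i _ => ?_
  rw [Fintype.sum_eq_single s fun j hj => by simp [delta, hj]]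
  simp [delta]

lemma smin_delta_zero (q : Fin (N + 1) → ℝ) : smin (delta 0) q = (∑ j, q j) • delta 0 := by
  ext k
  simp [smin_delta_left, delta, eq_comm]

lemma smin_delta_last (q : Fin (N + 1) → ℝ) : smin (delta (Fin.last N)) q = q := by
  ext k
  simp [smin_delta_left, Fin.le_last]

lemma smax_delta_zero (p : Fin (N + 1) → ℝ) : smax p (delta 0) = p := by
  ext k
  simp [smax_delta_right]

lemma halfSwitch_eq : halfSwitch (N + 1) = (1 / 2 : ℝ) • (delta 0 + delta (Fin.last N)) := by
  ext i
  simp only [halfSwitch, delta, Pi.smul_apply, Pi.add_apply, smul_eq_mul, Fin.ext_iff,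
    Fin.val_zero, Fin.val_last, Nat.add_sub_cancel]
  split_ifs <;> ring

lemma smax_smin_halfSwitch {p q : Fin (N + 1) → ℝ} (hp : ∑ i, p i = 1) (hq : ∑ j, q j = 1)
    (hpq : ∀ i j, p i ≠ 0 → q j ≠ 0 → i ≤ j) :
    smax p (smin (halfSwitch (N + 1)) q) = (1 / 2 : ℝ) • (p + q) := by
  rw [halfSwitch_eq, smin_smul_left, smin_add_left, smin_delta_zero, smin_delta_last, hq,
    one_smul, smax_smul_right, smax_add_right, smax_delta_zero, smax_eq_smul_of_le hpq, hp,
    one_smul]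

theorem exists_add_eq_sum_eq_of_le_sum (x : Fin N → ℕ) {a : ℕ} (ha : a ≤ ∑ k, x k) :
    ∃ y z : Fin N → ℕ,
      y + z = x ∧ ∑ k, y k = a ∧ ∀ i j, y i ≠ 0 → z j ≠ 0 → i ≤ j := by
  induction N generalizing a with
  | zero => exact ⟨0, x, zero_add x, by simp_all, fun i => i.elim0⟩
  | succ N ih =>
    rw [Fin.sum_univ_succ] at ha
    by_cases h0 : a ≤ x 0
    · refine ⟨Pi.single 0 a, Function.update x 0 (x 0 - a), ?_, by simp, ?_⟩
      · ext k
        rcases eq_or_ne k 0 with rfl | hk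
        · simp [h0]
        · simp [hk]
      · intro i j hi _
        rcases eq_or_ne i 0 with rfl | hi0
        · exact Fin.zero_le j
        · simp [hi0] at hi
    · obtain ⟨y, z, hyz, hy, hsep⟩ := ih (fun k => x k.succ) (a := a - x 0) (by omega)
      refine ⟨Fin.cons (x 0) y, Fin.cons 0 z, ?_, ?_, ?_⟩
      · ext k
        cases k using Fin.cases with
        | zero => simp
        | succ k => simpa using congrFun hyz k
      · rw [Fin.sum_univ_succ]
        simp only [Fin.cons_zero, Fin.cons_succ, hy]
        omega
      · intro i j hi hj
        cases j using Fin.cases with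
        | zero => simp at hj
        | succ j =>
          cases i using Fin.cases with
          | zero => exact Fin.zero_le _
          | succ i => simpa using hsep i j (by simpa using hi) (by simpa using hj)

theorem card_support_le_sum (x : Fin N → ℕ) : #{k | x k ≠ 0} ≤ ∑ k, x k := by
  rw [← sum_filter_ne_zero, card_eq_sum_ones]
  exact sum_le_sum fun k hk => Nat.one_le_iff_ne_zero.mpr (mem_filter.mp hk).2

theorem card_support_pos {x : Fin N → ℕ} (hx : ∑ k, x k ≠ 0) : 0 < #{k | x k ≠ 0} := by
  obtain ⟨k, -, hk⟩ := exists_ne_zero_of_sum_ne_zero hx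
  exact card_pos.mpr ⟨k, by simpa using hk⟩

theorem card_support_add_card_support_le {x y z : Fin N → ℕ} (hyz : y + z = x)
    (hsep : ∀ i j, y i ≠ 0 → z j ≠ 0 → i ≤ j) :
    #{k | y k ≠ 0} + #{k | z k ≠ 0} ≤ #{k | x k ≠ 0} + 1 := by
  have hcard := card_union_add_card_inter
    (s := ({k | y k ≠ 0} : Finset (Fin N))) (t := {k | z k ≠ 0})
  rw [← filter_or, ← filter_and] at hcard
  have hunion : #{k | y k ≠ 0 ∨ z k ≠ 0} = #{k | x k ≠ 0} := by
    simp only [← hyz, Pi.add_apply, ne_eq, Nat.add_eq_zero_iff, not_and_or]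
  have hinter : #{k | y k ≠ 0 ∧ z k ≠ 0} ≤ 1 := card_le_one.mpr fun i hi j hj => by
    simp only [mem_filter, mem_univ, true_and] at hi hj
    exact le_antisymm (hsep i j hi.1 hj.2) (hsep j i hj.1 hi.2)
  omega

theorem realizable_zero_of_card_support_le_one {S : Set (Fin N → ℝ)} {n : ℕ}
    {x : Fin N → ℕ} (hx : ∑ k, x k = 2 ^ n) (h : #{k | x k ≠ 0} ≤ 1) :
    Realizable S (fun k => (x k : ℝ) / 2 ^ n) 0 := by
  obtain ⟨s, -, hs⟩ := exists_ne_zero_of_sum_ne_zero (hx ▸ (pow_pos two_pos n).ne')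
  have hzero (k : Fin N) (hk : k ≠ s) : x k = 0 := by
    by_contra hxk
    exact hk (card_le_one.mp h k (by simpa using hxk) s (by simpa using hs))
  have hxs : x s = 2 ^ n := by rw [← hx, Fintype.sum_eq_single s hzero]
  convert Realizable.point s using 1
  ext k
  rcases eq_or_ne k s with rfl | hk
  · simp [delta, hxs]
  · simp [delta, hk, hzero k hk]

theorem exists_realizable_le_f_card_support (n : ℕ) (x : Fin (N + 1) → ℕ)
    (hx : ∑ k, x k = 2 ^ n) :
    ∃ m ≤ f n #{k | x k ≠ 0},
      Realizable {halfSwitch (N + 1)} (fun k => (x k : ℝ) / 2 ^ n) m := by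
  induction n generalizing x with
  | zero =>
    have hpt : #{k | x k ≠ 0} ≤ 1 := by simpa [hx] using card_support_le_sum x
    exact ⟨0, Nat.zero_le _, realizable_zero_of_card_support_le_one hx hpt⟩
  | succ n ih =>
    by_cases hpt : #{k | x k ≠ 0} ≤ 1
    · exact ⟨0, Nat.zero_le _, realizable_zero_of_card_support_le_one hx hpt⟩
    obtain ⟨y, z, hyz, hy, hsep⟩ :=
      exists_add_eq_sum_eq_of_le_sum x (a := 2 ^ n) (by rw [hx, pow_succ]; omega)
    have hz : ∑ k, z k = 2 ^ n := by
      have := congrArg (fun v : Fin (N + 1) → ℕ => ∑ k, v k) hyz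
      simp only [Pi.add_apply, sum_add_distrib, hx, hy, pow_succ] at this
      omega
    obtain ⟨m₁, hm₁, hy_real⟩ := ih y hy
    obtain ⟨m₂, hm₂, hz_real⟩ := ih z hz
    have hnorm {v : Fin (N + 1) → ℕ} (hv : ∑ k, v k = 2 ^ n) :
        ∑ k, (v k : ℝ) / 2 ^ n = 1 := by
      rw [← sum_div, ← Nat.cast_sum, hv]
      simp
    have hmix : (fun k => (x k : ℝ) / 2 ^ (n + 1)) =
        smax (fun k => (y k : ℝ) / 2 ^ n)
          (smin (halfSwitch (N + 1)) fun k => (z k : ℝ) / 2 ^ n) := by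
      rw [smax_smin_halfSwitch (hnorm hy) (hnorm hz) fun i j hi hj =>
        hsep i j (by rintro h; simp [h] at hi) (by rintro h; simp [h] at hj)]
      ext k
      simp only [← hyz, Pi.add_apply, Pi.smul_apply, smul_eq_mul, Nat.cast_add, pow_succ]
      ring
    have hswitch : Realizable {halfSwitch (N + 1)} (halfSwitch (N + 1)) 1 := .single rfl
    refine ⟨m₁ + (1 + m₂), ?_, hmix ▸ hy_real.parallel (hswitch.series hz_real)⟩
    have hcard := card_support_add_card_support_le hyz hsep
    have hlt := f_add_f_lt_f_succ (n := n) (card_support_pos (by rw [hy]; positivity))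
      (card_support_pos (by rw [hz]; positivity)) (by omega) hcard
    omega

/-- Binary `N`-state distributions: every `(x₀/2^n, …, x_{N-1}/2^n)` is realizable
from the switch set consisting of the single `N`-state ½-pswitch using at most
`f(n,N)` pswitches. -/
theorem binary_N_state (N : ℕ) (hN : 1 ≤ N) (n : ℕ) (x : Fin N → ℕ)
    (hx : ∑ k, x k = 2 ^ n) :
    ∃ m ≤ f n N, Realizable {halfSwitch N} (fun k => (x k : ℝ) / 2 ^ n) m := by
  obtain ⟨N, rfl⟩ : ∃ M, N = M + 1 := ⟨N - 1, by omega⟩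
  obtain ⟨m, hm, hreal⟩ := exists_realizable_le_f_card_support n x hx
  exact ⟨m, hm.trans (f_monotone n ((card_filter_le _ _).trans (card_fin _).le)), hreal⟩

end
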